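/- There exists a constant C > 0 such that for every R ≥ 2, Σ_{(p,q)∈Ω_R} Σ_{i=1}^{T(p,q)} a_i(frac(x₊(p,q))) ≤ C·R³·(ln R)³. (Bound for the numerator of A'_R obtained in the proof of Theorem 2.) -/

import Mathlib

/-!
Write `D = p² + 4q`. Every complete quotient of `frac x₊(p, q)` is a reduced surd `(P + √D) / Q`
(`P < √D < P + Q`, `Q < P + √D`, `Q ∣ D - P²`), and within one least period they are pairwise
distinct, since a repetition would produce a shorter period. As `a_i ≤ (P + √D) / Q < 2√D / Q`,
the period sum is at most `2√D · Σ 1/Q` over the reduced surds of discriminant `D`. Summing over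
`(p, q)` and exchanging the order of summation, for fixed `p` and `Q` the pair `(q, P)` is
determined by `P mod Q` and `(D - (P mod Q)²) / Q`, so there are `O(R + Q)` such pairs; the harmonic
sum over `Q ≤ 4R` then gives `O(R³ log R)`.
-/

open MeasureTheory Filter Set

/-- The Gauss map `y ↦ frac (1/y)`. -/
noncomputable def gaussMap : ℝ → ℝ := fun y => Int.fract (1 / y)

/-- The `i`-th partial quotient of the continued fraction of `x` (for `i ≥ 1`):
`a_i(x) = ⌊1 / G^[i-1](x)⌋`. -/
noncomputable def cfDigit (i : ℕ) (x : ℝ) : ℤ := ⌊1 / (gaussMap^[i - 1] x)⌋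

/-- The larger root `x₊(p,q) = (√(p² + 4q) − p)/2` of `x² + p x = q`. -/
noncomputable def xPlus (p q : ℤ) : ℝ := (Real.sqrt ((p : ℝ) ^ 2 + 4 * (q : ℝ)) - (p : ℝ)) / 2

/-- `Ω_R`: the integer points `(p,q)` with `p² + q² ≤ R²`, `p² + 4q > 0`,
and `p² + 4q` not a perfect square. -/
def OmegaSet (R : ℝ) : Set (ℤ × ℤ) :=
  {pq | (pq.1 : ℝ) ^ 2 + (pq.2 : ℝ) ^ 2 ≤ R ^ 2 ∧ 0 < pq.1 ^ 2 + 4 * pq.2 ∧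
    ¬ IsSquare (pq.1 ^ 2 + 4 * pq.2)}

/-- `P_i(k)`: the Lebesgue measure of `{x ∈ (0,1) : x irrational, a_i(x) = k}`. -/
noncomputable def gkProb (i : ℕ) (k : ℕ) : ℝ :=
  (volume {x : ℝ | x ∈ Set.Ioo (0 : ℝ) 1 ∧ Irrational x ∧ cfDigit i x = (k : ℤ)}).toReal

/-- `T(p,q)`: the least period of the (purely periodic) sequence of partial quotients
of `frac (x₊(p,q))`. -/
noncomputable def period (p q : ℤ) : ℕ :=
  sInf {T : ℕ | 1 ≤ T ∧ ∀ i : ℕ, 1 ≤ i →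
    cfDigit (i + T) (Int.fract (xPlus p q)) = cfDigit i (Int.fract (xPlus p q))}

/-- The sum `Σ_{i=1}^{T(p,q)} a_i(frac (x₊(p,q)))` of the partial quotients
over one least period. -/
noncomputable def periodSum (p q : ℤ) : ℤ :=
  ∑ i ∈ Finset.Icc 1 (period p q), cfDigit i (Int.fract (xPlus p q))

open scoped Finset

theorem Function.injOn_iterate_Iio_of_periodic {α β : Type*} {f : α → α} {φ : α → β} {x : α}
    {T : ℕ} (hT : Function.Periodic (fun n => φ (f^[n] x)) T)
    (hmin : ∀ d, 0 < d → Function.Periodic (fun n => φ (f^[n] x)) d → T ≤ d) :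
    InjOn (f^[·] x) (Iio T) := by
  have key : ∀ i j, i < j → j < T → f^[i] x ≠ f^[j] x := by
    intro i j hij hjT hx
    have hper : Function.Periodic (fun n => φ (f^[n] x)) (j - i) := by
      intro n
      have hiT : i ≤ i * T := Nat.le_mul_of_pos_right i (by omega)
      obtain ⟨m, hm⟩ : ∃ m, n + i * T = m + i := ⟨n + i * T - i, by omega⟩
      calc φ (f^[n + (j - i)] x) = φ (f^[n + (j - i) + i * T] x) := (hT.nat_mul i _).symm
        _ = φ (f^[m] (f^[j] x)) := by rw [← iterate_add_apply]; congr 2; omega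
        _ = φ (f^[n + i * T] x) := by rw [← hx, ← iterate_add_apply, hm]
        _ = φ (f^[n] x) := hT.nat_mul i n
    exact absurd (hmin _ (by omega) hper) (by omega)
  intro i hi j hj hx
  rcases lt_trichotomy i j with h | h | h
  · exact absurd hx (key i j h hj)
  · exact h
  · exact absurd hx.symm (key j i h hi)

lemma Int.ediv_add_sub_ediv_le {a t Q : ℤ} (hQ : 0 < Q) :
    (a + t) / Q - a / Q ≤ (t + Q - 1) / Q := by
  rw [Int.le_ediv_iff_mul_le hQ]
  have h₁ := Int.ediv_mul_le (a + t) hQ.ne'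
  have h₂ := Int.lt_ediv_add_one_mul_self a hQ
  nlinarith

lemma finsum_mem_le_sum {α M : Type*} [AddCommMonoid M] [PartialOrder M] [IsOrderedAddMonoid M]
    {s : Set α} {t : Finset α} (hst : s ⊆ t) {f g : α → M} (hfg : ∀ a ∈ s, f a ≤ g a)
    (hg : ∀ a ∈ t, 0 ≤ g a) : ∑ᶠ a ∈ s, f a ≤ ∑ a ∈ t, g a := by
  classical
  rw [finsum_mem_eq_sum_of_subset f (t := {a ∈ t | a ∈ s})
    (fun a ha => by simpa using ⟨hst ha.1, ha.1⟩) (fun a ha => (Finset.mem_filter.mp ha).2)]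
  exact (Finset.sum_le_sum fun a ha => hfg a (Finset.mem_filter.mp ha).2).trans
    (Finset.sum_le_sum_of_subset_of_nonneg (Finset.filter_subset _ _) fun a ha _ => hg a ha)

lemma Finset.sum_sum_filter_product_eq_sum_card_smul {α β γ M : Type*} [AddCommMonoid M]
    (X : Finset α) (Y : Finset β) (Z : Finset γ) (r : α → β → γ → Prop)
    [∀ x y z, Decidable (r x y z)] (g : γ → M) :
    ∑ x ∈ X, ∑ yz ∈ Y ×ˢ Z with r x yz.1 yz.2, g yz.2 =
      ∑ z ∈ Z, #{xy ∈ X ×ˢ Y | r xy.1 xy.2 z} • g z := by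
  simp only [Finset.sum_filter, Finset.card_filter, Finset.sum_product, Finset.sum_smul,
    ite_smul, one_smul, zero_smul]
  exact (Finset.sum_comm.trans (Finset.sum_congr rfl fun _ _ => Finset.sum_comm)).symm

lemma sum_Icc_inv_le_one_add_log {B : ℤ} (hB : 0 ≤ B) :
    ∑ Q ∈ Finset.Icc 1 B, (Q : ℝ)⁻¹ ≤ 1 + Real.log B := by
  lift B to ℕ using hB
  rw [Int.Icc_eq_finset_map, Finset.sum_map]
  convert harmonic_le_one_add_log B using 1
  · simp [harmonic, add_comm]
  · simp

lemma sum_Icc_add_mul_div_le {a b : ℝ} (ha : 0 ≤ a) {B : ℤ} (hB : 0 ≤ B) :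
    ∑ Q ∈ Finset.Icc 1 B, (a + b * Q) / Q ≤ a * (1 + Real.log B) + b * B := by
  have hterm : ∀ Q ∈ Finset.Icc 1 B, (a + b * Q) / Q = a * (Q : ℝ)⁻¹ + b := fun Q hQ => by
    have : (Q : ℝ) ≠ 0 := by exact_mod_cast (by linarith [(Finset.mem_Icc.mp hQ).1] : Q ≠ 0)
    field_simp
  have hcard : ((B + 1 - 1).toNat : ℝ) = B := by
    rw [add_sub_cancel_right, ← Int.cast_natCast, Int.toNat_of_nonneg hB]
  rw [Finset.sum_congr rfl hterm, Finset.sum_add_distrib, ← Finset.mul_sum, Finset.sum_const,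
    Int.card_Icc, nsmul_eq_mul, hcard, mul_comm (B : ℝ)]
  gcongr
  exact sum_Icc_inv_le_one_add_log hB

/-- `(P + √D) / Q` is a reduced quadratic surd: it exceeds `1` and its conjugate `(P - √D) / Q`
lies in `(-1, 0)`. -/
structure IsReducedSurd (D P Q : ℤ) : Prop where
  dvd : Q ∣ D - P ^ 2
  lt_sqrt : (P : ℝ) < √D
  sqrt_lt : √D < P + Q
  lt_add_sqrt : (Q : ℝ) < P + √D

namespace IsReducedSurd

variable {D P Q : ℤ}

lemma Q_pos (h : IsReducedSurd D P Q) : 0 < Q := by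
  have : (0 : ℝ) < Q := by linarith [h.lt_sqrt, h.sqrt_lt]
  exact_mod_cast this

lemma P_pos (h : IsReducedSurd D P Q) : 0 < P := by
  have : (0 : ℝ) < P := by linarith [h.sqrt_lt, h.lt_add_sqrt]
  exact_mod_cast this

lemma Q_lt_two_mul_sqrt (h : IsReducedSurd D P Q) : (Q : ℝ) < 2 * √D := by
  linarith [h.lt_sqrt, h.lt_add_sqrt]

lemma one_lt_div (h : IsReducedSurd D P Q) : 1 < (P + √D) / Q := by
  rw [_root_.one_lt_div (by exact_mod_cast h.Q_pos)]
  exact h.lt_add_sqrt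

lemma div_lt_two_mul_sqrt_div (h : IsReducedSurd D P Q) : (P + √D) / Q < 2 * √D / Q := by
  gcongr
  · exact_mod_cast h.Q_pos
  · linarith [h.lt_sqrt]

lemma eq_of_modEq {P₁ P₂ : ℤ} (h₁ : IsReducedSurd D P₁ Q) (h₂ : IsReducedSurd D P₂ Q)
    (hP : P₁ ≡ P₂ [ZMOD Q]) : P₁ = P₂ := by
  have hlt : |P₂ - P₁| < Q := by
    have : |((P₂ - P₁ : ℤ) : ℝ)| < Q := by
      rw [abs_lt]; push_cast
      constructor <;> linarith [h₁.lt_sqrt, h₁.sqrt_lt, h₂.lt_sqrt, h₂.sqrt_lt]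
    exact_mod_cast this
  linarith [Int.eq_zero_of_abs_lt_dvd hP.dvd hlt]

theorem exists_of_sub_div_mem_Ioo {Q₀ : ℤ} (hD : 0 ≤ D) (hQ₀ : 0 < Q₀) (hdvd : Q₀ ∣ D - P ^ 2)
    (hlt : (Q₀ : ℝ) < P + √D) (hx : (√D - P) / Q₀ ∈ Ioo 0 1) :
    ∃ Q, IsReducedSurd D P Q ∧ (√D - P) / Q₀ = ((P + √D) / Q)⁻¹ := by
  obtain ⟨Q, hQ⟩ := hdvd
  set x := (√D - P) / Q₀ with hx_def
  have hQ₀R : (0 : ℝ) < Q₀ := by exact_mod_cast hQ₀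
  have hsq : √(D : ℝ) ^ 2 = D := Real.sq_sqrt (by exact_mod_cast hD)
  have hsub : √D - P = Q₀ * x := by rw [hx_def]; field_simp
  have hQx : (Q : ℝ) = x * (P + √D) := by
    have hQR : (Q₀ : ℝ) * Q = D - P ^ 2 := by exact_mod_cast hQ.symm
    have : (Q₀ : ℝ) * Q = Q₀ * (x * (P + √D)) := by
      rw [hQR]; linear_combination (↑P + √↑D) * hsub - hsq
    exact mul_left_cancel₀ hQ₀R.ne' this
  obtain ⟨hx0, hx1⟩ := hx
  have hPD : (0 : ℝ) < P + √D := hQ₀R.trans hlt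
  refine ⟨Q, ⟨⟨Q₀, by rw [hQ, mul_comm]⟩, ?_, ?_, ?_⟩, ?_⟩
  · nlinarith
  · nlinarith
  · rw [hQx]; nlinarith
  · rw [hQx, inv_div, mul_div_assoc, div_self hPD.ne', mul_one]

theorem exists_gaussMap_inv_eq (h : IsReducedSurd D P Q) (hirr : Irrational √D) :
    ∃ P' Q', IsReducedSurd D P' Q' ∧ gaussMap ((P + √D) / Q)⁻¹ = ((P' + √D) / Q')⁻¹ := by
  set s := (P + √D) / Q with hs
  have hQ : (0 : ℝ) < Q := by exact_mod_cast h.Q_pos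
  have hs_irr : Irrational s := (hirr.intCast_add P).div_intCast h.Q_pos.ne'
  have ha : (1 : ℝ) ≤ ⌊s⌋ := by exact_mod_cast Int.le_floor.mpr (by exact_mod_cast h.one_lt_div.le)
  have hfract : Int.fract s = (√D - (⌊s⌋ * Q - P : ℤ)) / Q := by
    rw [Int.fract, hs]; push_cast; field_simp; ring
  have hgauss : gaussMap s⁻¹ = Int.fract s := by rw [gaussMap, one_div, inv_inv]
  obtain ⟨Q', hred, hQ'⟩ := exists_of_sub_div_mem_Ioo (P := ⌊s⌋ * Q - P)
    (irrational_sqrt_intCast_iff.mp hirr).2 h.Q_pos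
    (by obtain ⟨c, hc⟩ := h.dvd; exact ⟨c - ⌊s⌋ ^ 2 * Q + 2 * ⌊s⌋ * P, by linear_combination hc⟩)
    (by push_cast; nlinarith [h.lt_sqrt])
    (hfract ▸ ⟨Int.fract_pos.mpr (hs_irr.ne_int _), Int.fract_lt_one s⟩)
  exact ⟨_, Q', hred, by rw [hgauss, hfract, hQ']⟩

lemma dvd_sub_emod_sq (h : IsReducedSurd D P Q) :
    Q ∣ D - (P % Q) ^ 2 := by
  have hP : Q ∣ P - P % Q := (Int.mod_modEq P Q).dvd
  have : D - (P % Q) ^ 2 = (D - P ^ 2) + (P - P % Q) * (P + P % Q) := by ring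
  rw [this]
  exact dvd_add h.dvd (dvd_mul_of_dvd_left hP _)

lemma mem_Icc_prod {B : ℤ} (h : IsReducedSurd D P Q) (hB : 2 * √D ≤ B) :
    (P, Q) ∈ Finset.Icc 1 B ×ˢ Finset.Icc 1 B := by
  have hP : (P : ℝ) ≤ B := by linarith [h.lt_sqrt, Real.sqrt_nonneg D]
  have hQ : (Q : ℝ) ≤ B := by linarith [h.Q_lt_two_mul_sqrt]
  simp only [Finset.mem_product, Finset.mem_Icc]
  exact ⟨⟨h.P_pos, by exact_mod_cast hP⟩, ⟨h.Q_pos, by exact_mod_cast hQ⟩⟩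

lemma eq_of_emod_eq {D₁ D₂ P₁ P₂ : ℤ} (h₁ : IsReducedSurd D₁ P₁ Q) (h₂ : IsReducedSurd D₂ P₂ Q)
    (hr : P₁ % Q = P₂ % Q) (hm : (D₁ - (P₁ % Q) ^ 2) / Q = (D₂ - (P₂ % Q) ^ 2) / Q) :
    D₁ = D₂ ∧ P₁ = P₂ := by
  have e₁ := Int.ediv_mul_cancel h₁.dvd_sub_emod_sq
  have e₂ := Int.ediv_mul_cancel h₂.dvd_sub_emod_sq
  have hD : D₁ = D₂ := by rw [hm, hr] at e₁; linarith
  subst hD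
  exact ⟨rfl, h₁.eq_of_modEq h₂ hr⟩

end IsReducedSurd

theorem exists_isReducedSurd_fract_xPlus {p q : ℤ} (hD : 5 ≤ p ^ 2 + 4 * q)
    (hirr : Irrational √((p ^ 2 + 4 * q : ℤ) : ℝ)) :
    ∃ P Q, IsReducedSurd (p ^ 2 + 4 * q) P Q ∧
      Int.fract (xPlus p q) = ((P + √((p ^ 2 + 4 * q : ℤ) : ℝ)) / Q)⁻¹ := by
  set D := p ^ 2 + 4 * q
  set n := ⌊xPlus p q⌋
  have hxPlus : xPlus p q = (√D - p) / 2 := by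
    rw [xPlus]; push_cast [D]; ring_nf
  have hfract : Int.fract (xPlus p q) = (√D - (p + 2 * n : ℤ)) / (2 : ℤ) := by
    rw [show Int.fract (xPlus p q) = xPlus p q - n from rfl, hxPlus]; push_cast; ring
  have hx_irr : Irrational (xPlus p q) := by
    rw [hxPlus]; exact_mod_cast (hirr.sub_intCast p).div_natCast two_ne_zero
  have h2 : (2 : ℝ) < √D := by
    rw [Real.lt_sqrt zero_le_two]; exact_mod_cast (by omega : (4 : ℤ) < D)
  have hx1 := Int.fract_lt_one (xPlus p q)
  have hlt : ((2 : ℤ) : ℝ) < (p + 2 * n : ℤ) + √D := by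
    rw [hfract] at hx1; push_cast at hx1 ⊢; linarith
  obtain ⟨Q, hred, hQ⟩ := IsReducedSurd.exists_of_sub_div_mem_Ioo (D := D) (by omega) two_pos
    ⟨2 * (q - p * n - n ^ 2), by ring⟩ hlt (hfract ▸ ⟨Int.fract_pos.mpr (hx_irr.ne_int _), hx1⟩)
  exact ⟨_, Q, hred, hfract.trans hQ⟩

theorem exists_isReducedSurd_gaussMap_iterate {p q : ℤ} (hD : 5 ≤ p ^ 2 + 4 * q)
    (hirr : Irrational √((p ^ 2 + 4 * q : ℤ) : ℝ)) (n : ℕ) :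
    ∃ P Q, IsReducedSurd (p ^ 2 + 4 * q) P Q ∧
      gaussMap^[n] (Int.fract (xPlus p q)) = ((P + √((p ^ 2 + 4 * q : ℤ) : ℝ)) / Q)⁻¹ := by
  induction n with
  | zero => exact exists_isReducedSurd_fract_xPlus hD hirr
  | succ n ih =>
    obtain ⟨P, Q, hred, hx⟩ := ih
    rw [Function.iterate_succ_apply', hx]
    exact hred.exists_gaussMap_inv_eq hirr

lemma periodic_cfDigit_period (p q : ℤ) :
    Function.Periodic (fun n => cfDigit (n + 1) (Int.fract (xPlus p q))) (period p q) := by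
  rcases Set.eq_empty_or_nonempty {T : ℕ | 1 ≤ T ∧ ∀ i, 1 ≤ i →
      cfDigit (i + T) (Int.fract (xPlus p q)) = cfDigit i (Int.fract (xPlus p q))} with h | h
  · simp [period, h]
  · intro n
    simpa only [period, add_right_comm] using (Nat.sInf_mem h).2 (n + 1) le_add_self

lemma period_le_of_periodic {p q : ℤ} {d : ℕ} (hd : 0 < d)
    (h : Function.Periodic (fun n => cfDigit (n + 1) (Int.fract (xPlus p q))) d) :
    period p q ≤ d := by
  refine Nat.sInf_le ⟨hd, fun i hi => ?_⟩
  obtain ⟨n, rfl⟩ := Nat.exists_eq_add_of_le' hi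
  simpa only [add_right_comm] using h n

lemma injOn_gaussMap_iterate_period (p q : ℤ) :
    InjOn (gaussMap^[·] (Int.fract (xPlus p q))) (Iio (period p q)) :=
  Function.injOn_iterate_Iio_of_periodic (φ := fun y => ⌊1 / y⌋) (periodic_cfDigit_period p q)
    fun _ => period_le_of_periodic

lemma periodSum_eq_sum_range (p q : ℤ) :
    periodSum p q = ∑ n ∈ Finset.range (period p q), cfDigit (n + 1) (Int.fract (xPlus p q)) := by
  rw [periodSum, Finset.range_eq_Ico, Finset.sum_Ico_add' (fun i => cfDigit i _), zero_add,
    Finset.Ico_add_one_right_eq_Icc]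

open scoped Classical in
theorem periodSum_le_sum_isReducedSurd {p q : ℤ} (hD : 5 ≤ p ^ 2 + 4 * q)
    (hirr : Irrational √((p ^ 2 + 4 * q : ℤ) : ℝ)) (S : Finset (ℤ × ℤ))
    (hS : ∀ P Q, IsReducedSurd (p ^ 2 + 4 * q) P Q → (P, Q) ∈ S) :
    (periodSum p q : ℝ) ≤ 2 * √((p ^ 2 + 4 * q : ℤ) : ℝ) *
      ∑ PQ ∈ S with IsReducedSurd (p ^ 2 + 4 * q) PQ.1 PQ.2, (PQ.2 : ℝ)⁻¹ := by
  set D := p ^ 2 + 4 * q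
  set x := Int.fract (xPlus p q)
  choose P Q hred hG using exists_isReducedSurd_gaussMap_iterate hD hirr
  have hinj : InjOn (fun n => (P n, Q n)) (Finset.range (period p q)) := by
    intro i hi j hj hij
    simp only [Prod.mk.injEq] at hij
    refine injOn_gaussMap_iterate_period p q (by simpa using hi) (by simpa using hj) ?_
    simp only [hG, hij]
  have hdigit : ∀ n, (cfDigit (n + 1) x : ℝ) ≤ 2 * √D * (Q n : ℝ)⁻¹ := by
    intro n
    rw [cfDigit, add_tsub_cancel_right, hG n, one_div, inv_inv, ← div_eq_mul_inv]
    exact (Int.floor_le _).trans (hred n).div_lt_two_mul_sqrt_div.le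
  rw [periodSum_eq_sum_range, Int.cast_sum]
  calc ∑ n ∈ Finset.range (period p q), (cfDigit (n + 1) x : ℝ)
      ≤ ∑ n ∈ Finset.range (period p q), 2 * √D * (Q n : ℝ)⁻¹ :=
        Finset.sum_le_sum fun n _ => hdigit n
    _ = 2 * √D * ∑ PQ ∈ (Finset.range (period p q)).image (fun n => (P n, Q n)), (PQ.2 : ℝ)⁻¹ := by
        rw [Finset.sum_image hinj, Finset.mul_sum]
    _ ≤ 2 * √D * ∑ PQ ∈ S with IsReducedSurd D PQ.1 PQ.2, (PQ.2 : ℝ)⁻¹ := by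
        gcongr
        · exact fun PQ hPQ _ =>
            inv_nonneg.mpr (by exact_mod_cast (Finset.mem_filter.mp hPQ).2.Q_pos.le)
        · intro PQ hPQ
          obtain ⟨n, -, rfl⟩ := Finset.mem_image.mp hPQ
          exact Finset.mem_filter.mpr ⟨hS _ _ (hred n), hred n⟩

open scoped Classical in
theorem card_isReducedSurd_le (c K Q : ℤ) (hK : 0 ≤ K) (hQ : 0 < Q) (s : Finset ℤ) :
    (#{qP ∈ Finset.Icc (-K) K ×ˢ s | IsReducedSurd (c + 4 * qP.1) qP.2 Q} : ℤ) ≤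
      8 * K + 2 * Q := by
  set A : Finset (ℤ × ℤ) := {qP ∈ Finset.Icc (-K) K ×ˢ s | IsReducedSurd (c + 4 * qP.1) qP.2 Q}
  set M := (8 * K + Q - 1) / Q
  have hM : M * Q ≤ 8 * K + Q - 1 := Int.ediv_mul_le _ hQ.ne'
  have hM0 : 0 ≤ M := Int.ediv_nonneg (by omega) hQ.le
  -- the second coordinate of `f` is shifted so that it ranges over `[0, M]`
  let f : ℤ × ℤ → ℤ × ℤ := fun qP =>
    (qP.2 % Q, (c + 4 * qP.1 - (qP.2 % Q) ^ 2) / Q - (c - 4 * K - (qP.2 % Q) ^ 2) / Q)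
  have hmaps : ∀ qP ∈ A, f qP ∈ Finset.Icc 0 (Q - 1) ×ˢ Finset.Icc 0 M := by
    rintro ⟨q, P⟩ hqP
    simp only [A, Finset.mem_filter, Finset.mem_product, Finset.mem_Icc] at hqP
    have hr := Int.emod_lt_of_pos P hQ
    have hsum : c + 4 * q - (P % Q) ^ 2 = (c - 4 * K - (P % Q) ^ 2) + 4 * (q + K) := by ring
    simp only [f, Finset.mem_product, Finset.mem_Icc]
    refine ⟨⟨Int.emod_nonneg P hQ.ne', by omega⟩, ?_, ?_⟩
    · exact sub_nonneg.mpr (Int.ediv_le_ediv hQ (by omega))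
    · rw [hsum]
      exact (Int.ediv_add_sub_ediv_le hQ).trans (Int.ediv_le_ediv hQ (by omega))
  have hinj : InjOn f A := by
    rintro ⟨q₁, P₁⟩ h₁ ⟨q₂, P₂⟩ h₂ hf
    simp only [A, Finset.coe_filter, Set.mem_ofPred_eq] at h₁ h₂
    simp only [f, Prod.mk.injEq] at hf
    obtain ⟨hr, hm⟩ := hf
    rw [← hr, sub_left_inj] at hm
    obtain ⟨hD, hP⟩ := h₁.2.eq_of_emod_eq h₂.2 hr (by rwa [← hr])
    exact Prod.ext (by linarith) hP
  calc (#A : ℤ) ≤ #(Finset.Icc 0 (Q - 1) ×ˢ Finset.Icc 0 M) := by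
        exact_mod_cast Finset.card_le_card_of_injOn f hmaps hinj
    _ = Q * (M + 1) := by
        rw [Finset.card_product, Int.card_Icc, Int.card_Icc, Nat.cast_mul,
          Int.toNat_of_nonneg (by omega), Int.toNat_of_nonneg (by omega)]
        ring
    _ ≤ 8 * K + 2 * Q := by linarith

lemma five_le_of_mem_OmegaSet {R : ℝ} {p q : ℤ} (h : (p, q) ∈ OmegaSet R) :
    5 ≤ p ^ 2 + 4 * q := by
  obtain ⟨-, hpos, hns⟩ := h
  dsimp only at hpos hns
  have hsq : p ^ 2 % 4 = 0 ∨ p ^ 2 % 4 = 1 := by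
    rcases Int.even_or_odd p with ⟨k, rfl⟩ | ⟨k, rfl⟩ <;> ring_nf <;> omega
  by_contra! hlt
  rcases (by omega : p ^ 2 + 4 * q = 1 ∨ p ^ 2 + 4 * q = 4) with h | h
  · exact hns ⟨1, by simpa using h⟩
  · exact hns ⟨2, by simpa using h⟩

lemma irrational_sqrt_of_mem_OmegaSet {R : ℝ} {p q : ℤ} (h : (p, q) ∈ OmegaSet R) :
    Irrational √((p ^ 2 + 4 * q : ℤ) : ℝ) :=
  irrational_sqrt_intCast_iff.mpr ⟨h.2.2, h.2.1.le⟩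

lemma sqrt_le_of_mem_OmegaSet {R : ℝ} (hR : 2 ≤ R) {p q : ℤ} (h : (p, q) ∈ OmegaSet R) :
    √((p ^ 2 + 4 * q : ℤ) : ℝ) ≤ 2 * R := by
  have hpq := h.1
  rw [Real.sqrt_le_left (by linarith)]
  push_cast
  nlinarith [sq_nonneg ((q : ℝ) - 2)]

lemma OmegaSet_subset {R : ℝ} (hR : 0 ≤ R) :
    OmegaSet R ⊆ ↑(Finset.Icc (-⌈R⌉) ⌈R⌉ ×ˢ Finset.Icc (-⌈R⌉) ⌈R⌉) := by
  rintro ⟨p, q⟩ ⟨hpq, -⟩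
  dsimp only at hpq
  have hp := abs_le_of_sq_le_sq' (by nlinarith [sq_nonneg (q : ℝ)] : (p : ℝ) ^ 2 ≤ R ^ 2) hR
  have hq := abs_le_of_sq_le_sq' (by nlinarith [sq_nonneg (p : ℝ)] : (q : ℝ) ^ 2 ≤ R ^ 2) hR
  have hR' := Int.le_ceil R
  simp only [Finset.coe_product, Finset.coe_Icc, Set.mem_prod, Set.mem_Icc]
  refine ⟨⟨?_, ?_⟩, ?_, ?_⟩ <;> rw [← Int.cast_le (R := ℝ)] <;> push_cast <;> linarith

open scoped Classical in
theorem periodSum_le_of_mem_OmegaSet {R : ℝ} (hR : 2 ≤ R) {p q : ℤ} (h : (p, q) ∈ OmegaSet R) :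
    (periodSum p q : ℝ) ≤ 4 * R * ∑ PQ ∈ Finset.Icc 1 ⌈4 * R⌉ ×ˢ Finset.Icc 1 ⌈4 * R⌉ with
      IsReducedSurd (p ^ 2 + 4 * q) PQ.1 PQ.2, (PQ.2 : ℝ)⁻¹ := by
  have hsqrt := sqrt_le_of_mem_OmegaSet hR h
  have hB : 4 * R ≤ ⌈4 * R⌉ := Int.le_ceil _
  refine (periodSum_le_sum_isReducedSurd (five_le_of_mem_OmegaSet h)
    (irrational_sqrt_of_mem_OmegaSet h) _ fun P Q hred => hred.mem_Icc_prod (by linarith)).trans ?_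
  refine mul_le_mul_of_nonneg_right (by linarith) (Finset.sum_nonneg fun PQ hPQ => ?_)
  exact inv_nonneg.mpr (by exact_mod_cast (Finset.mem_filter.mp hPQ).2.Q_pos.le)

open scoped Classical in
theorem finsum_periodSum_le {R : ℝ} (hR : 2 ≤ R) :
    ∑ᶠ pq ∈ OmegaSet R, (periodSum pq.1 pq.2 : ℝ) ≤
      4 * R * ((2 * ⌈R⌉ + 1) * ∑ Q ∈ Finset.Icc 1 ⌈4 * R⌉, (8 * ⌈R⌉ + 2 * Q : ℝ) / Q) := by
  set K := ⌈R⌉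
  set B := ⌈4 * R⌉
  set box := Finset.Icc (-K) K
  let g : ℤ × ℤ → ℝ := fun pq => ∑ PQ ∈ Finset.Icc 1 B ×ˢ Finset.Icc 1 B with
    IsReducedSurd (pq.1 ^ 2 + 4 * pq.2) PQ.1 PQ.2, (PQ.2 : ℝ)⁻¹
  have hK : 0 ≤ K := Int.ceil_nonneg (by linarith)
  have hg : ∀ pq, 0 ≤ g pq := fun pq => Finset.sum_nonneg fun PQ h =>
    inv_nonneg.mpr (by exact_mod_cast (Finset.mem_filter.mp h).2.Q_pos.le)
  calc ∑ᶠ pq ∈ OmegaSet R, (periodSum pq.1 pq.2 : ℝ) ≤ ∑ pq ∈ box ×ˢ box, 4 * R * g pq :=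
        finsum_mem_le_sum (OmegaSet_subset (by linarith))
          (fun pq h => periodSum_le_of_mem_OmegaSet hR h) fun pq _ =>
          mul_nonneg (by linarith) (hg pq)
    _ = 4 * R * ∑ _p ∈ box, ∑ Q ∈ Finset.Icc 1 B,
          #{qP ∈ box ×ˢ Finset.Icc 1 B | IsReducedSurd (_p ^ 2 + 4 * qP.1) qP.2 Q} • (Q : ℝ)⁻¹ := by
        rw [← Finset.mul_sum, Finset.sum_product]
        refine congrArg (4 * R * ·) (Finset.sum_congr rfl fun p _ => ?_)
        exact Finset.sum_sum_filter_product_eq_sum_card_smul box (Finset.Icc 1 B)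
          (Finset.Icc 1 B) (fun q P Q => IsReducedSurd (p ^ 2 + 4 * q) P Q) fun Q : ℤ => (Q : ℝ)⁻¹
    _ ≤ 4 * R * ∑ _p ∈ box, ∑ Q ∈ Finset.Icc 1 B, (8 * K + 2 * Q : ℝ) / Q := by
        gcongr with p _ Q hQ
        have hQ : 0 < Q := (Finset.mem_Icc.mp hQ).1
        rw [nsmul_eq_mul, ← div_eq_mul_inv]
        gcongr
        exact_mod_cast card_isReducedSurd_le (p ^ 2) K Q hK hQ _
    _ = 4 * R * ((2 * K + 1) * ∑ Q ∈ Finset.Icc 1 B, (8 * K + 2 * Q : ℝ) / Q) := by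
        have hcard : ((K + 1 - -K).toNat : ℝ) = 2 * K + 1 := by
          rw [← Int.cast_natCast, Int.toNat_of_nonneg (by omega)]; push_cast; ring
        rw [Finset.sum_const, Int.card_Icc, nsmul_eq_mul, hcard]

lemma one_half_lt_log {R : ℝ} (hR : 2 ≤ R) : 1 / 2 < Real.log R :=
  (by linarith [Real.log_two_gt_d9] : (1 / 2 : ℝ) < Real.log 2).trans_le
    (Real.log_le_log two_pos hR)

lemma majorant_le_mul_cube_mul_log {R : ℝ} (hR : 2 ≤ R) :
    4 * R * ((2 * ⌈R⌉ + 1) * ∑ Q ∈ Finset.Icc 1 ⌈4 * R⌉, (8 * ⌈R⌉ + 2 * Q : ℝ) / Q) ≤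
      1472 * R ^ 3 * Real.log R := by
  set K := ⌈R⌉
  set B := ⌈4 * R⌉
  have hK : (K : ℝ) ≤ R + 1 := (Int.ceil_lt_add_one R).le
  have hB : (B : ℝ) ≤ 4 * R + 1 := (Int.ceil_lt_add_one _).le
  have hB1 : 4 * R ≤ (B : ℝ) := Int.le_ceil _
  have hL := one_half_lt_log hR
  have hlogB : Real.log B ≤ 4 * Real.log R := by
    have : (2 : ℝ) ^ 3 ≤ R ^ 3 := pow_le_pow_left₀ (by norm_num) hR 3
    calc Real.log B ≤ Real.log (R ^ 4) := Real.log_le_log (by linarith) (by nlinarith)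
      _ = 4 * Real.log R := by rw [Real.log_pow]; norm_num
  have hS0 : 0 ≤ ∑ Q ∈ Finset.Icc 1 B, (8 * K + 2 * Q : ℝ) / Q :=
    Finset.sum_nonneg fun Q hQ => by
      have : (0 : ℝ) < Q := by exact_mod_cast (Finset.mem_Icc.mp hQ).1
      positivity
  have hS : ∑ Q ∈ Finset.Icc 1 B, (8 * K + 2 * Q : ℝ) / Q ≤ 92 * R * Real.log R := by
    have hlogB0 : 0 ≤ Real.log B := Real.log_nonneg (by linarith)
    have h8K : 8 * (K : ℝ) * (1 + Real.log B) ≤ (12 * R) * (6 * Real.log R) :=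
      mul_le_mul (by linarith) (by linarith) (by linarith) (by positivity)
    have hB0 : 0 ≤ B := Int.ceil_nonneg (by linarith)
    refine (sum_Icc_add_mul_div_le (by positivity) hB0).trans ?_
    nlinarith
  calc 4 * R * ((2 * K + 1) * ∑ Q ∈ Finset.Icc 1 B, (8 * K + 2 * Q : ℝ) / Q)
      ≤ 4 * R * ((4 * R) * (92 * R * Real.log R)) := by
        gcongr
        linarith
    _ = 1472 * R ^ 3 * Real.log R := by ring

/-- Bound for the numerator of `A'_R` from the proof of Theorem 2:
`Σ_{(p,q)∈Ω_R} Σ_{i=1}^{T(p,q)} a_i(frac (x₊(p,q))) ≤ C R³ (ln R)³` for all `R ≥ 2`. -/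
theorem arnold_numerator_bound :
    ∃ C > (0 : ℝ), ∀ R : ℝ, 2 ≤ R →
      (∑ᶠ pq ∈ OmegaSet R, (periodSum pq.1 pq.2 : ℝ)) ≤ C * R ^ 3 * Real.log R ^ 3 := by
  refine ⟨6000, by norm_num, fun R hR => ?_⟩
  have hL := one_half_lt_log hR
  calc ∑ᶠ pq ∈ OmegaSet R, (periodSum pq.1 pq.2 : ℝ)
      ≤ 1472 * R ^ 3 * Real.log R :=
        (finsum_periodSum_le hR).trans (majorant_le_mul_cube_mul_log hR)
    _ ≤ 1472 * R ^ 3 * (4 * Real.log R ^ 3) := by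
        gcongr
        have h4L : 0 < 4 * Real.log R ^ 2 - 1 := by nlinarith
        nlinarith [mul_pos (by linarith : 0 < Real.log R) h4L]
    _ ≤ 6000 * R ^ 3 * Real.log R ^ 3 := by
        have : 0 ≤ R ^ 3 * Real.log R ^ 3 := by positivity
        linarith
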